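/- arXiv:2408.07223 — 5 statements merged into one kernel-verified Lean document; each statement's English description precedes it below -/
import Mathlib

section
/- Let K and H be finitely generated groups, each containing a nilpotent subgroup of finite index (i.e., finitely generated virtually nilpotent groups). Then the restricted wreath product K ≀ H is virtually nilpotent if and only if H is finite or K is trivial. -/
/-!
If `H` is finite, the base group is the full product `H → K`, which is virtually nilpotent and
has finite index in `K ≀ H`; if `K` is trivial, `K ≀ H ≅ H`.

Conversely, let `H` be infinite, `K` nontrivial and `N` a subgroup of finite index in `K ≀ H`.
Then `N` contains a nontrivial base element `c` and infinitely many elements `u ∈ H`, and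
`⁅c, u⁆ = c * (u • c)⁻¹` is again a base element of `N`. It is nontrivial for all but finitely many
of these `u`, because `u • c` has finite support moving with `u`. Iterating produces nontrivial
elements in every term of the lower central series of `N`, so `N` is not nilpotent.
-/

/-- The base group of the restricted wreath product `K ≀ H`: the subgroup of `H → K`
consisting of functions with finite multiplicative support, under pointwise
multiplication. -/
def wreathBase (K H : Type*) [Group K] [Group H] : Subgroup (H → K) where
  carrier := {f | (Function.mulSupport f).Finite}
  one_mem' := by simp [Function.mulSupport_one]
  mul_mem' := by
    intro f g hf hg
    exact (hf.union hg).subset (Function.mulSupport_mul f g)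
  inv_mem' := by
    intro f hf
    simpa [Function.mulSupport_inv] using hf

/-- The shift of a finitely supported function by an element of `H`:
`(h • f) x = f (h⁻¹ * x)`. -/
def wreathShiftEquiv (K H : Type*) [Group K] [Group H] (h : H) :
    wreathBase K H ≃* wreathBase K H where
  toFun f := ⟨fun x => f.1 (h⁻¹ * x), by
    show (Function.mulSupport fun x => f.1 (h⁻¹ * x)).Finite
    have h1 : Function.mulSupport (fun x => f.1 (h⁻¹ * x))
        = (fun x : H => h⁻¹ * x) ⁻¹' Function.mulSupport f.1 := rfl
    rw [h1]
    exact f.2.preimage fun a _ b _ hab => mul_left_cancel hab⟩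
  invFun f := ⟨fun x => f.1 (h * x), by
    show (Function.mulSupport fun x => f.1 (h * x)).Finite
    have h1 : Function.mulSupport (fun x => f.1 (h * x))
        = (fun x : H => h * x) ⁻¹' Function.mulSupport f.1 := rfl
    rw [h1]
    exact f.2.preimage fun a _ b _ hab => mul_left_cancel hab⟩
  left_inv f := Subtype.ext (funext fun x => by simp)
  right_inv f := Subtype.ext (funext fun x => by simp)
  map_mul' f g := rfl

/-- The action of `H` on the base group of the restricted wreath product,
by left translation of the argument. -/
def wreathAction (K H : Type*) [Group K] [Group H] : H →* MulAut (wreathBase K H) where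
  toFun := wreathShiftEquiv K H
  map_one' := MulEquiv.ext fun f => Subtype.ext (funext fun x => by
    simp [wreathShiftEquiv])
  map_mul' a b := MulEquiv.ext fun f => Subtype.ext (funext fun x => by
    simp [wreathShiftEquiv, mul_assoc])

/-- The restricted wreath product `K ≀ H`. -/
abbrev Wreath (K H : Type*) [Group K] [Group H] :=
  wreathBase K H ⋊[wreathAction K H] H

/-- A group is virtually nilpotent if it has a nilpotent subgroup of finite index. -/
def VirtuallyNilpotent (G : Type*) [Group G] : Prop :=
  ∃ N : Subgroup G, N.FiniteIndex ∧ Group.IsNilpotent N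

open scoped commutatorElement

section VirtuallyNilpotent

variable {G G' : Type*} [Group G] [Group G']

instance Subgroup.finiteIndex_comap (f : G →* G') (N : Subgroup G') [N.FiniteIndex] :
    (N.comap f).FiniteIndex :=
  ⟨by rw [Subgroup.index_comap]; exact Subgroup.FiniteIndex.index_ne_zero⟩

lemma Subgroup.infinite_of_finiteIndex [Infinite G] (N : Subgroup G)
    [N.FiniteIndex] : Infinite N :=
  not_finite_iff_infinite.mp fun h =>
    have := N.finite_iff_finite_and_finiteIndex.mpr ⟨h, ‹_›⟩
    not_finite G

lemma VirtuallyNilpotent.of_mulEquiv (e : G ≃* G') (h : VirtuallyNilpotent G) :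
    VirtuallyNilpotent G' := by
  obtain ⟨N, hN, hNil⟩ := h
  refine ⟨N.map (e : G →* G'), ⟨?_⟩, Group.nilpotent_of_mulEquiv (e.subgroupMap N)⟩
  rw [Subgroup.index_map_equiv]
  exact hN.index_ne_zero

lemma VirtuallyNilpotent.of_finiteIndex {B : Subgroup G} [B.FiniteIndex]
    (h : VirtuallyNilpotent B) : VirtuallyNilpotent G := by
  obtain ⟨N, hN, hNil⟩ := h
  refine ⟨N.map B.subtype, ⟨?_⟩,
    Group.nilpotent_of_mulEquiv (N.equivMapOfInjective B.subtype B.subtype_injective)⟩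
  rw [Subgroup.index_map_subtype]
  exact mul_ne_zero hN.index_ne_zero Subgroup.FiniteIndex.index_ne_zero

lemma VirtuallyNilpotent.pi {ι : Type*} [Finite ι] (h : VirtuallyNilpotent G) :
    VirtuallyNilpotent (ι → G) := by
  obtain ⟨N, hN, hNil⟩ := h
  have : Fintype ι := Fintype.ofFinite ι
  have hinj : Function.Injective (N.subtype.compLeft ι) :=
    N.subtype_injective.comp_left
  have hrange : (N.subtype.compLeft ι).range = Subgroup.pi Set.univ fun _ => N := by
    ext f
    exact ⟨fun ⟨g, hg⟩ i _ => hg ▸ (g i).2, fun hf => ⟨fun i => ⟨f i, hf i trivial⟩, rfl⟩⟩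
  refine ⟨(N.subtype.compLeft ι).range, ⟨?_⟩,
    Group.nilpotent_of_mulEquiv (MonoidHom.ofInjective hinj)⟩
  rw [hrange, Subgroup.index_pi]
  exact Finset.prod_ne_zero_iff.mpr fun _ _ => hN.index_ne_zero

end VirtuallyNilpotent

section Nilpotent

variable {G : Type*} [Group G]

lemma Subgroup.inter_lowerCentralSeries_nonempty {S : Subgroup G} {T : Set G} (hTS : T ⊆ S)
    (hT : ∀ t ∈ T, ∃ g ∈ S, ⁅t, g⁆ ∈ T) (hne : T.Nonempty) (n : ℕ) :
    (T ∩ S.lowerCentralSeries n).Nonempty := by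
  induction n with
  | zero => simpa [Set.inter_eq_left.mpr hTS] using hne
  | succ n ih =>
    obtain ⟨t, htT, htS⟩ := ih
    obtain ⟨g, hgS, hgT⟩ := hT t htT
    exact ⟨⁅t, g⁆, hgT, Subgroup.commutator_mem_commutator htS hgS⟩

lemma Subgroup.one_mem_of_forall_exists_commutatorElement_mem {S : Subgroup G}
    [Group.IsNilpotent S] {T : Set G} (hTS : T ⊆ S) (hT : ∀ t ∈ T, ∃ g ∈ S, ⁅t, g⁆ ∈ T)
    (hne : T.Nonempty) : (1 : G) ∈ T := by
  obtain ⟨n, hn⟩ := (Subgroup.isNilpotent_iff_lowerCentralSeries S).mp ‹_›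
  obtain ⟨t, htT, ht⟩ := Subgroup.inter_lowerCentralSeries_nonempty hTS hT hne n
  rw [hn, SetLike.mem_coe, Subgroup.mem_bot] at ht
  rwa [ht] at htT

end Nilpotent

section SemidirectProduct

variable {N G : Type*} [Group N] [Group G] {φ : G →* MulAut N}

open SemidirectProduct in
lemma SemidirectProduct.commutatorElement_inl_inr (n : N) (g : G) :
    ⁅(inl n : N ⋊[φ] G), (inr g : N ⋊[φ] G)⁆ = inl (n * (φ g n)⁻¹) := by
  ext <;> simp [commutatorElement_def]

lemma VirtuallyNilpotent.semidirectProduct_of_finite [Finite G] (hN : VirtuallyNilpotent N) :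
    VirtuallyNilpotent (N ⋊[φ] G) := by
  have : (SemidirectProduct.inl : N →* N ⋊[φ] G).range.FiniteIndex := by
    rw [SemidirectProduct.range_inl_eq_ker_rightHom]
    infer_instance
  exact (hN.of_mulEquiv (MonoidHom.ofInjective SemidirectProduct.inl_injective)).of_finiteIndex

lemma VirtuallyNilpotent.semidirectProduct_of_subsingleton [Subsingleton N]
    (hG : VirtuallyNilpotent G) : VirtuallyNilpotent (N ⋊[φ] G) := by
  have hinj : Function.Injective (SemidirectProduct.rightHom : N ⋊[φ] G →* G) := fun a b hab =>
    SemidirectProduct.ext (Subsingleton.elim _ _) hab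
  exact hG.of_mulEquiv
    (MulEquiv.ofBijective _ ⟨hinj, SemidirectProduct.rightHom_surjective⟩).symm

end SemidirectProduct

section Wreath

variable {K H : Type*} [Group K] [Group H]

lemma wreathAction_apply (h : H) (f : wreathBase K H) (x : H) :
    (wreathAction K H h f : H → K) x = (f : H → K) (h⁻¹ * x) :=
  rfl

lemma wreathBase_eq_top [Finite H] : wreathBase K H = ⊤ :=
  eq_top_iff.mpr fun f _ => Set.toFinite (Function.mulSupport f)

lemma VirtuallyNilpotent.wreathBase [Finite H] (hK : VirtuallyNilpotent K) :
    VirtuallyNilpotent (wreathBase K H) :=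
  hK.pi.of_mulEquiv ((MulEquiv.subgroupCongr wreathBase_eq_top).trans Subgroup.topEquiv).symm

instance [Subsingleton K] : Subsingleton (wreathBase K H) :=
  ⟨fun _ _ => Subtype.ext (Subsingleton.elim _ _)⟩

lemma infinite_wreathBase [Infinite H] [Nontrivial K] : Infinite (wreathBase K H) := by
  classical
  obtain ⟨k, hk⟩ := exists_ne (1 : K)
  refine Infinite.of_injective (fun h => (⟨Pi.mulSingle h k,
    (Set.finite_singleton h).subset Pi.mulSupport_mulSingle_subset⟩ : wreathBase K H))
    fun a b hab => by_contra fun hne => hk ?_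
  simpa [Pi.mulSingle_eq_of_ne hne] using congrFun (congrArg Subtype.val hab) a

lemma exists_mul_inv_wreathAction_ne_one {U : Set H} (hU : U.Infinite) {c : wreathBase K H}
    (hc : c ≠ 1) : ∃ u ∈ U, c * (wreathAction K H u c)⁻¹ ≠ 1 := by
  obtain ⟨x, hx⟩ : ∃ x, (c : H → K) x ≠ 1 := by
    by_contra! h
    exact hc (Subtype.ext (funext h))
  -- `u • c` vanishes at `x` as soon as `u` avoids the finite set `x * (mulSupport c)⁻¹`
  obtain ⟨u, huU, hu⟩ := (hU.sdiff (c.2.image fun s => x * s⁻¹)).nonempty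
  have hcu : (c : H → K) (u⁻¹ * x) = 1 := by
    by_contra h
    exact hu ⟨u⁻¹ * x, h, by group⟩
  refine ⟨u, huU, fun h => hx ?_⟩
  simpa [wreathAction_apply, hcu] using congrFun (congrArg Subtype.val h) x

theorem not_virtuallyNilpotent_wreath [Infinite H] [Nontrivial K] :
    ¬ VirtuallyNilpotent (Wreath K H) := by
  rintro ⟨N, hN, hNil⟩
  let U := N.comap (SemidirectProduct.inr : H →* Wreath K H)
  let M := N.comap (SemidirectProduct.inl : wreathBase K H →* Wreath K H)
  have : Infinite (wreathBase K H) := infinite_wreathBase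
  have hU : (U : Set H).Infinite := Set.infinite_coe_iff.mp U.infinite_of_finiteIndex
  have : Infinite M := M.infinite_of_finiteIndex
  obtain ⟨c, hcM, hc⟩ := M.exists_ne_one_of_nontrivial
  let T : Set (Wreath K H) := {x | x ∈ N ∧ ∃ c ≠ 1, SemidirectProduct.inl c = x}
  have hT : ∀ x ∈ T, ∃ g ∈ N, ⁅x, g⁆ ∈ T := by
    rintro _ ⟨hxN, c, hc, rfl⟩
    obtain ⟨u, hu, huc⟩ := exists_mul_inv_wreathAction_ne_one hU hc
    refine ⟨SemidirectProduct.inr u, hu, ?_, _, huc,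
      (SemidirectProduct.commutatorElement_inl_inr c u).symm⟩
    rw [commutatorElement_def]
    exact N.mul_mem (N.mul_mem (N.mul_mem hxN hu) (N.inv_mem hxN)) (N.inv_mem hu)
  obtain ⟨-, c, hc, h⟩ := Subgroup.one_mem_of_forall_exists_commutatorElement_mem
    (fun x hx => hx.1) hT ⟨_, hcM, c, hc, rfl⟩
  exact hc (SemidirectProduct.inl_injective (h.trans (map_one _).symm))

end Wreath

theorem wreath_virtuallyNilpotent_iff_general (K H : Type*) [Group K] [Group H]
    (hK : VirtuallyNilpotent K) (hH : VirtuallyNilpotent H) :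
    VirtuallyNilpotent (Wreath K H) ↔ (Finite H ∨ ∀ k : K, k = 1) := by
  refine ⟨fun hW => ?_, ?_⟩
  · by_contra! h
    obtain ⟨_, k, hk⟩ := h
    have : Nontrivial K := nontrivial_of_ne k 1 hk
    exact not_virtuallyNilpotent_wreath hW
  · rintro (hfin | htriv)
    · exact (hK.wreathBase (H := H)).semidirectProduct_of_finite
    · have : Subsingleton K := subsingleton_of_forall_eq 1 htriv
      exact hH.semidirectProduct_of_subsingleton

/-- For finitely generated virtually nilpotent groups `K` and `H`, the restricted
wreath product `K ≀ H` is virtually nilpotent if and only if `H` is finite or `K`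
is trivial. -/
theorem wreath_virtuallyNilpotent_iff (K H : Type*) [Group K] [Group H]
    [Group.FG K] [Group.FG H]
    (hK : VirtuallyNilpotent K) (hH : VirtuallyNilpotent H) :
    VirtuallyNilpotent (Wreath K H) ↔ (Finite H ∨ ∀ k : K, k = 1) :=
  wreath_virtuallyNilpotent_iff_general K H hK hH
end

section
/- Let H be an infinite group with identity element e. Then for every natural number n there exists a finite subset F of H with |F| ≥ n such that hF ≠ F for every h ∈ H with h ≠ e. -/
/-!
A finite set `F` is a union of right cosets of its stabilizer `S = {h | h F = F}`, so `|S|`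
divides `|F|`. Take `|F| = p` prime, with `1 ∈ F`: if `S ≠ 1` then `|S| = p` and `S ⊆ F`, so `F`
is a subgroup of order `p`, hence cyclic and generated by any of its elements `x ≠ 1`. Putting
into `F` an element `y` outside `{1, x, …, x ^ (p - 1)}` rules this out.
-/

open MulAction Pointwise

namespace MulAction

variable {G : Type*} [Group G]

lemma natCard_stabilizer_dvd_card (s : Finset G) :
    Nat.card (stabilizer G (s : Set G)) ∣ s.card := by
  set S := stabilizer G (s : Set G)
  -- `S * s = s`, inverted: the coset-counting lemma wants the subgroup on the right.
  have hinv : (s : Set G)⁻¹ * S = (s : Set G)⁻¹ := by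
    rw [← inv_coe_set (H := S), ← mul_inv_rev, stabilizer_mul_self]
  rw [← Set.ncard_coe_finset, ← Nat.card_coe_set_eq, ← Set.natCard_inv, ← hinv,
    Subgroup.card_mul_eq_card_subgroup_mul_card_quotient]
  exact dvd_mul_right _ _

lemma coe_stabilizer_eq_of_one_mem {s : Finset G} (hs : (1 : G) ∈ s)
    (hcard : s.card ≤ Nat.card (stabilizer G (s : Set G))) :
    (stabilizer G (s : Set G) : Set G) = s := by
  refine Set.eq_of_subset_of_ncard_le (fun g hg => ?_) ?_ s.finite_toSet
  · simpa using (mem_stabilizer_set.1 hg 1).2 hs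
  · rwa [Set.ncard_coe_finset, ← Nat.card_coe_set_eq]

end MulAction

lemma Subgroup.exists_pow_eq_of_natCard_prime {G : Type*} [Group G] {K : Subgroup G} {p : ℕ}
    (hp : p.Prime) (hK : Nat.card K = p) {x y : G} (hx : x ∈ K) (hx1 : x ≠ 1) (hy : y ∈ K) :
    ∃ k < p, x ^ k = y := by
  classical
  have : Finite K := Nat.finite_of_card_ne_zero (hK ▸ hp.ne_zero)
  have horder : orderOf x = p :=
    (hp.eq_one_or_self_of_dvd _ (hK ▸ K.orderOf_dvd_natCard hx)).resolve_left
      (by simpa using hx1)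
  have hzpowers : Subgroup.zpowers x = K :=
    Subgroup.eq_of_le_of_card_ge (K.zpowers_le.2 hx) (by rw [Nat.card_zpowers, horder, hK])
  have hfin : IsOfFinOrder x := orderOf_pos_iff.1 (horder ▸ hp.pos)
  obtain ⟨k, hk, hxk⟩ := Finset.mem_image.1
    ((hfin.mem_zpowers_iff_mem_range_orderOf).1 (hzpowers ▸ hy))
  exact ⟨k, horder ▸ Finset.mem_range.1 hk, hxk⟩

open Finset in
lemma exists_finset_card_eq_stabilizer_eq_bot {H : Type*} [Group H] [Infinite H] {p : ℕ}
    (hp : p.Prime) (hp3 : 3 ≤ p) :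
    ∃ F : Finset H, F.card = p ∧ stabilizer H (F : Set H) = ⊥ := by
  classical
  obtain ⟨x, hx1⟩ := exists_ne (1 : H)
  obtain ⟨y, hy⟩ := Infinite.exists_notMem_finset ((range p).image (x ^ ·))
  obtain ⟨F, hsub, hcard⟩ :=
    Infinite.exists_superset_card_eq {1, x, y} p (card_le_three.trans hp3)
  refine ⟨F, hcard, ?_⟩
  rcases hp.eq_one_or_self_of_dvd _ (hcard ▸ natCard_stabilizer_dvd_card F) with hbot | hfull
  · exact Subgroup.eq_bot_of_card_eq _ hbot
  · have hSF := coe_stabilizer_eq_of_one_mem (hsub (by simp)) (by rw [hcard, hfull])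
    have hmem : ∀ g ∈ ({1, x, y} : Finset H), g ∈ stabilizer H (F : Set H) := fun g hg => by
      rw [← SetLike.mem_coe, hSF]; exact hsub hg
    obtain ⟨k, hk, rfl⟩ := Subgroup.exists_pow_eq_of_natCard_prime hp hfull
      (hmem x (by simp)) hx1 (hmem y (by simp))
    exact absurd (mem_image_of_mem _ (mem_range.2 hk)) hy

/-- In any infinite group `H`, for every natural number `n` there is a finite
subset `F` of `H` with at least `n` elements such that `h F ≠ F` for every
`h ≠ 1` in `H`. -/
theorem exists_finset_card_ge_no_invariant_translate
    (H : Type*) [Group H] [Infinite H] (n : ℕ) :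
    ∃ F : Finset H, n ≤ F.card ∧
      ∀ h : H, h ≠ 1 → (fun f => h * f) '' (F : Set H) ≠ (F : Set H) := by
  obtain ⟨p, hpn, hp⟩ := Nat.exists_infinite_primes (max n 3)
  obtain ⟨F, hcard, hstab⟩ :=
    exists_finset_card_eq_stabilizer_eq_bot (H := H) hp (le_of_max_le_right hpn)
  refine ⟨F, hcard ▸ le_of_max_le_left hpn, fun h hne hinv => hne ?_⟩
  rw [← Subgroup.mem_bot, ← hstab, mem_stabilizer_iff, ← Set.image_smul]
  exact hinv
end

section
/- Let H be an infinite group and let K be a group containing a subgroup S that is a simple nonabelian group. Then the restricted wreath product K ≀ H is not virtually solvable: no subgroup of finite index in K ≀ H is solvable. -/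
/-!
Pass to the normal core `N` of a solvable subgroup of finite index. Since `H` is infinite
and `N` has finite index, the copies of a noncommuting `a ∈ S` at two distinct points
`h₁ ≠ h₂` are congruent modulo `N`. Commuting their quotient with the copy of `b ∈ S` at `h₂`
puts the copy of `⁅b, a⁆ ≠ 1` at `h₂` into `N`; by simplicity the whole copy of `S` at `h₂`
then lies in `N`, so `S` would be solvable.
-/

open scoped commutatorElement

theorem IsSimpleGroup.isSolvable_of_injective_of_mem_normal {S G : Type*}
    [Group S] [Group G] [IsSimpleGroup S] {N : Subgroup G} [N.Normal] [Group.IsSolvable N] {φ : S →* G}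
    (hφ : Function.Injective φ) {s : S} (hs : s ≠ 1) (hsN : φ s ∈ N) : Group.IsSolvable S := by
  have hcomap : N.comap φ = ⊤ :=
    (IsSimpleGroup.eq_bot_or_eq_top_of_normal _ inferInstance).resolve_left fun h =>
      hs ((Subgroup.mem_bot).mp (h ▸ hsN))
  have hφN (s : S) : φ s ∈ N := Subgroup.mem_comap.mp (hcomap ▸ Subgroup.mem_top s)
  exact Group.isSolvable_of_isSolvable_injective (f := φ.codRestrict N hφN)
    fun x y hxy => hφ (congrArg Subtype.val hxy)

namespace wreathBase

variable {K H : Type*} [Group K] [Group H] [DecidableEq H]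

def mulSingle (h : H) : K →* wreathBase K H :=
  (MonoidHom.mulSingle (fun _ => K) h).codRestrict _ fun _ =>
    (Set.finite_singleton h).subset Pi.mulSupport_mulSingle_subset

@[simp]
theorem coe_mulSingle (h : H) (k : K) : (mulSingle h k : H → K) = Pi.mulSingle h k := rfl

theorem mulSingle_injective (h : H) : Function.Injective (mulSingle (K := K) h) :=
  fun _ _ hxy => Pi.mulSingle_injective h (congrArg Subtype.val hxy)

theorem commutatorElement_mulSingle (h : H) (k : K) (f : wreathBase K H) :
    ⁅mulSingle h k, f⁆ = mulSingle h ⁅k, (f : H → K) h⁆ := by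
  ext x
  by_cases hx : x = h
  · subst hx
    simp [commutatorElement_def]
  · simp [commutatorElement_def, Pi.mulSingle_eq_of_ne hx]

end wreathBase

open SemidirectProduct in
/-- If `H` is an infinite group and `K` contains a nonabelian simple subgroup,
then the restricted wreath product `K ≀ H` is not virtually solvable: it has no
solvable subgroup of finite index. -/
theorem wreath_not_virtuallySolvable (K H : Type*) [Group K] [Group H] [Infinite H]
    (S : Subgroup K) (hsimple : IsSimpleGroup S) (hnonab : ¬ ∀ a b : S, a * b = b * a) :
    ¬ ∃ M : Subgroup (Wreath K H), M.FiniteIndex ∧ IsSolvable M := by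
  classical
  rintro ⟨M, hM, hMsolv⟩
  set N := M.normalCore
  have : Group.IsSolvable M := hMsolv
  have : Group.IsSolvable N := Group.isSolvable_of_isSolvable_injective
    (Subgroup.inclusion_injective M.normalCore_le)
  push Not at hnonab
  obtain ⟨a, b, hab⟩ := hnonab
  let δ (h : H) : wreathBase K H := wreathBase.mulSingle h (a : K)
  obtain ⟨h₁, h₂, hne, hδ⟩ := Finite.exists_ne_map_eq_of_infinite
    fun h => ((inl (δ h) : Wreath K H) : Wreath K H ⧸ N)
  have hdiff : inl ((δ h₁)⁻¹ * δ h₂) ∈ N := by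
    simpa only [map_mul, map_inv] using QuotientGroup.eq.mp hδ
  have hdiff_at : (((δ h₁)⁻¹ * δ h₂ : wreathBase K H) : H → K) h₂ = a := by
    simp [δ, Pi.mulSingle_eq_of_ne' hne]
  have hcomm : inl (wreathBase.mulSingle h₂ ((⁅b, a⁆ : S) : K)) ∈ N := by
    have := Subgroup.commutator_le_right ⊤ N <|
      Subgroup.commutator_mem_commutator
        (Subgroup.mem_top (inl (wreathBase.mulSingle h₂ (b : K)))) hdiff
    rwa [← map_commutatorElement, wreathBase.commutatorElement_mulSingle, hdiff_at] at this
  have hba : ⁅b, a⁆ ≠ 1 := fun h => hab (commutatorElement_eq_one_iff_mul_comm.mp h).symm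
  have hinj : Function.Injective (inl.comp ((wreathBase.mulSingle h₂).comp S.subtype) :
      S →* Wreath K H) :=
    inl_injective.comp ((wreathBase.mulSingle_injective h₂).comp Subtype.val_injective)
  exact hab (IsSimpleGroup.comm_iff_isSolvable.mpr
    (IsSimpleGroup.isSolvable_of_injective_of_mem_normal hinj hba hcomm) a b)
end

section
/- The group presented by two generators a, b subject to the relations [a, bᵏ a b⁻ᵏ] = 1 for all k ∈ ℤ is isomorphic to the restricted wreath product ℤ ≀ ℤ, that is, to the semidirect product (⊕_{k∈ℤ} ℤ) ⋊ ℤ, where ℤ acts on the group of finitely supported functions ℤ → ℤ (under pointwise addition) by shifting the index. -/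
open scoped commutatorElement in
/-- The relators `[a, bᵏ a b⁻ᵏ]` for `k ∈ ℤ`, in the free group on the two
generators `a = FreeGroup.of 0` and `b = FreeGroup.of 1`, where
`[x, y] = x y x⁻¹ y⁻¹` is the commutator. -/
def lamplighterRels : Set (FreeGroup (Fin 2)) :=
  { r | ∃ k : ℤ, r = ⁅FreeGroup.of (0 : Fin 2),
      (FreeGroup.of (1 : Fin 2)) ^ k * FreeGroup.of (0 : Fin 2) *
        (FreeGroup.of (1 : Fin 2)) ^ (-k)⁆ }

/-- The shift action of `ℤ` on the group `⊕_{k∈ℤ} ℤ` of finitely supported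
functions `ℤ → ℤ` under pointwise addition: `(m • f) x = f (x - m)`. -/
noncomputable def lamplighterShift : Multiplicative ℤ →* MulAut (Multiplicative (ℤ →₀ ℤ)) where
  toFun m := AddEquiv.toMultiplicative (Finsupp.domCongr (M := ℤ)
    (Equiv.addLeft (Multiplicative.toAdd m)))
  map_one' := by
    ext f : 1
    show AddEquiv.toMultiplicative (Finsupp.domCongr (M := ℤ)
        (Equiv.addLeft (Multiplicative.toAdd (1 : Multiplicative ℤ)))) f
      = (1 : MulAut (Multiplicative (ℤ →₀ ℤ))) f
    rw [show Multiplicative.toAdd (1 : Multiplicative ℤ) = 0 from rfl, Equiv.addLeft_zero,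
      show (1 : Equiv.Perm ℤ) = Equiv.refl ℤ from rfl, Finsupp.domCongr_refl]
    rfl
  map_mul' a b := by
    ext f : 1
    show AddEquiv.toMultiplicative (Finsupp.domCongr (M := ℤ)
        (Equiv.addLeft (Multiplicative.toAdd (a * b)))) f
      = AddEquiv.toMultiplicative (Finsupp.domCongr (M := ℤ)
          (Equiv.addLeft (Multiplicative.toAdd a)))
        (AddEquiv.toMultiplicative (Finsupp.domCongr (M := ℤ)
          (Equiv.addLeft (Multiplicative.toAdd b))) f)
    rw [show Multiplicative.toAdd (a * b)
          = Multiplicative.toAdd a + Multiplicative.toAdd b from rfl,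
      Equiv.addLeft_add,
      show Equiv.addLeft (Multiplicative.toAdd a) * Equiv.addLeft (Multiplicative.toAdd b)
          = (Equiv.addLeft (Multiplicative.toAdd b)).trans
              (Equiv.addLeft (Multiplicative.toAdd a)) from rfl,
      ← Finsupp.domCongr_trans]
    rfl

/-! The lamps `bᵏ a b⁻ᵏ` commute pairwise: conjugating the relator for `k - j` by `bʲ` gives the
commutator of the lamps `j` and `k`. So `δₖ ↦ bᵏ a b⁻ᵏ`, `m ↦ bᵐ` defines a homomorphism out of
`(⊕ ℤ) ⋊ ℤ`, compatible with the shift because conjugation by `bᵐ` moves lamp `k` to lamp `m + k`.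
It is inverse to `a ↦ δ₀`, `b ↦ 1`, which kills the relators because `bᵏ a b⁻ᵏ ↦ δₖ` and the base
group is abelian. -/

section CommutingFamily

open Subgroup
open scoped IsMulCommutative

variable {ι G : Type*} [Group G] {g : ι → G}

noncomputable def Finsupp.liftOfCommute (hg : ∀ i j, Commute (g i) (g j)) :
    Multiplicative (ι →₀ ℤ) →* G :=
  haveI : IsMulCommutative (closure (Set.range g)) :=
    isMulCommutative_closure (by rintro _ ⟨i, rfl⟩ _ ⟨j, rfl⟩; exact hg i j)
  (closure (Set.range g)).subtype.comp <| AddMonoidHom.toMultiplicativeLeft <|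
    Finsupp.liftAddHom fun i => zmultiplesHom _ (Additive.ofMul ⟨g i, subset_closure ⟨i, rfl⟩⟩)

theorem Finsupp.liftOfCommute_single (hg : ∀ i j, Commute (g i) (g j)) (i : ι) (n : ℤ) :
    Finsupp.liftOfCommute hg (.ofAdd (single i n)) = g i ^ n := by
  simp [Finsupp.liftOfCommute]

end CommutingFamily

theorem lamplighterShift_single (m k n : ℤ) :
    lamplighterShift (.ofAdd m) (.ofAdd (Finsupp.single k n)) = .ofAdd (Finsupp.single (m + k) n) :=
  congrArg Multiplicative.ofAdd (Finsupp.equivMapDomain_single _ _ _)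

namespace Lamplighter

open Finsupp Multiplicative SemidirectProduct

abbrev Presented := PresentedGroup lamplighterRels

abbrev Wreath := Multiplicative (ℤ →₀ ℤ) ⋊[lamplighterShift] Multiplicative ℤ

def a : Presented := PresentedGroup.of 0

def b : Presented := PresentedGroup.of 1

def lamp (k : ℤ) : Presented := b ^ k * a * b ^ (-k)

theorem commute_a_lamp (k : ℤ) : Commute a (lamp k) := by
  have h := PresentedGroup.one_of_mem (rels := lamplighterRels) ⟨k, rfl⟩
  rw [map_commutatorElement, commutatorElement_eq_one_iff_commute] at h
  simp only [map_mul, map_zpow] at h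
  exact h

theorem zpow_mul_lamp_mul_zpow_neg (m k : ℤ) : b ^ m * lamp k * b ^ (-m) = lamp (m + k) := by
  simp only [lamp]
  group

theorem commute_lamp_lamp (j k : ℤ) : Commute (lamp j) (lamp k) := by
  have h := (commute_a_lamp (k - j)).map (MulAut.conj (b ^ j))
  rw [MulAut.conj_apply, MulAut.conj_apply, ← zpow_neg, zpow_mul_lamp_mul_zpow_neg,
    add_sub_cancel] at h
  exact h

theorem inr_ofAdd_one_zpow (m : ℤ) : (inr (ofAdd 1) : Wreath) ^ m = inr (ofAdd m) := by
  rw [← map_zpow, ← ofAdd_zsmul, smul_eq_mul, mul_one]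

theorem inr_zpow_mul_inl_single_mul_inr_zpow_neg (m k : ℤ) :
    (inr (ofAdd 1) : Wreath) ^ m * inl (ofAdd (single k 1)) * inr (ofAdd 1) ^ (-m)
      = inl (ofAdd (single (m + k) 1)) := by
  rw [inr_ofAdd_one_zpow, inr_ofAdd_one_zpow, ofAdd_neg, ← inl_aut, lamplighterShift_single]

noncomputable def toWreath : Presented →* Wreath :=
  PresentedGroup.toGroup (f := ![inl (ofAdd (single 0 1)), inr (ofAdd 1)]) <| by
    rintro _ ⟨k, rfl⟩
    simp only [map_commutatorElement, map_mul, map_zpow, FreeGroup.lift_apply_of,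
      Matrix.cons_val_zero, Matrix.cons_val_one]
    rw [inr_zpow_mul_inl_single_mul_inr_zpow_neg, add_zero, commutatorElement_eq_one_iff_commute]
    exact (Commute.all _ _).map inl

noncomputable def ofWreath : Wreath →* Presented :=
  SemidirectProduct.lift (liftOfCommute commute_lamp_lamp) (zpowersHom _ b) <| by
    intro g
    obtain ⟨m, rfl⟩ := ofAdd.surjective g
    ext k
    show liftOfCommute commute_lamp_lamp (lamplighterShift (ofAdd m) (ofAdd (single k 1)))
      = MulAut.conj (b ^ m) (liftOfCommute commute_lamp_lamp (ofAdd (single k 1)))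
    rw [lamplighterShift_single, liftOfCommute_single, liftOfCommute_single,
      zpow_one, zpow_one, MulAut.conj_apply, ← zpow_neg, zpow_mul_lamp_mul_zpow_neg]

theorem toWreath_a : toWreath a = inl (ofAdd (single 0 1)) := PresentedGroup.toGroup.of _

theorem toWreath_b : toWreath b = inr (ofAdd 1) := PresentedGroup.toGroup.of _

theorem toWreath_lamp (k : ℤ) : toWreath (lamp k) = inl (ofAdd (single k 1)) := by
  rw [lamp, map_mul, map_mul, map_zpow, map_zpow, toWreath_a, toWreath_b,
    inr_zpow_mul_inl_single_mul_inr_zpow_neg, add_zero]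

theorem ofWreath_inl_single (k : ℤ) : ofWreath (inl (ofAdd (single k 1))) = lamp k := by
  rw [ofWreath, lift_inl, liftOfCommute_single, zpow_one]

theorem ofWreath_inr (m : ℤ) : ofWreath (inr (ofAdd m)) = b ^ m := by
  rw [ofWreath, lift_inr, zpowersHom_apply, toAdd_ofAdd]

theorem ofWreath_comp_toWreath : ofWreath.comp toWreath = .id _ := by
  refine PresentedGroup.ext fun x => ?_
  fin_cases x
  · show ofWreath (toWreath a) = a
    rw [toWreath_a, ofWreath_inl_single, lamp, zpow_zero, neg_zero, zpow_zero, one_mul, mul_one]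
  · show ofWreath (toWreath b) = b
    rw [toWreath_b, ofWreath_inr, zpow_one]

theorem toWreath_comp_ofWreath : toWreath.comp ofWreath = .id _ := by
  refine SemidirectProduct.hom_ext ?_ ?_
  · refine Finsupp.mulHom_ext' fun k => MonoidHom.ext_mint ?_
    show toWreath (ofWreath (inl (ofAdd (single k 1)))) = inl (ofAdd (single k 1))
    rw [ofWreath_inl_single, toWreath_lamp]
  · refine MonoidHom.ext_mint ?_
    show toWreath (ofWreath (inr (ofAdd 1))) = inr (ofAdd 1)
    rw [ofWreath_inr, zpow_one, toWreath_b]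

end Lamplighter

/-- The group presented by two generators `a, b` subject to the relations
`[a, bᵏ a b⁻ᵏ] = 1` for all `k ∈ ℤ` is isomorphic to the restricted wreath
product `ℤ ≀ ℤ = (⊕_{k∈ℤ} ℤ) ⋊ ℤ`, where `ℤ` acts on finitely supported
functions `ℤ → ℤ` by shifting the index. -/
theorem presentedGroup_lamplighterRels_iso_wreath_int_int :
    Nonempty (PresentedGroup lamplighterRels ≃*
      (Multiplicative (ℤ →₀ ℤ)) ⋊[lamplighterShift] Multiplicative ℤ) :=
  ⟨Lamplighter.toWreath.toMulEquiv Lamplighter.ofWreath Lamplighter.ofWreath_comp_toWreath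
    Lamplighter.toWreath_comp_ofWreath⟩
end

section
/- Let G be an infinite group, n a natural number, and let 1 = Gₙ ≤ Gₙ₋₁ ≤ ⋯ ≤ G₁ ≤ G₀ ≤ G be a chain of subgroups such that each Gᵢ is normal in G, the quotient G/G₀ is finite, and for each i = 1, …, n the quotient group Gᵢ₋₁/Gᵢ is finitely generated and abelian. Then G has a normal subgroup N such that the quotient group G/N is infinite, finitely generated, and contains an abelian subgroup of finite index. -/
/-!
Let `Gᵢ₊₁` be the first term of the chain with `G ⧸ Gᵢ₊₁` infinite; it exists because `G ⧸ G₀`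
is finite while `G ⧸ Gₙ ≅ G` is not. Take `N = Gᵢ₊₁`: the previous term `A = Gᵢ` has finite index
and `A ⧸ N` is abelian, and `G` is generated modulo `N` by coset representatives of `A`
together with generators of `A` modulo `N`.
-/

theorem Fin.exists_castSucc_and_not_succ {n : ℕ} (P : Fin (n + 1) → Prop)
    (h0 : P 0) (hlast : ¬ P (Fin.last n)) : ∃ i : Fin n, P i.castSucc ∧ ¬ P i.succ := by
  induction n with
  | zero => exact absurd h0 hlast
  | succ n ih =>
    by_cases hn : P (Fin.last n).castSucc
    · exact ⟨Fin.last n, hn, hlast⟩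
    · obtain ⟨i, hi, hi'⟩ := ih (P ∘ Fin.castSucc) h0 hn
      exact ⟨i.castSucc, hi, by rwa [Fin.succ_castSucc]⟩

open Subgroup in
theorem Subgroup.exists_finset_closure_union_eq_top {G : Type*} [Group G]
    {H N : Subgroup G} [H.FiniteIndex] {S : Finset G}
    (hS : ∀ g ∈ H, g ∈ closure (↑S ∪ (N : Set G))) :
    ∃ T : Finset G, closure (↑T ∪ (N : Set G)) = ⊤ := by
  classical
  have : Fintype (G ⧸ H) := Fintype.ofFinite _
  set R : Finset G := Finset.univ.image (Quotient.out : G ⧸ H → G)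
  refine ⟨R ∪ S, eq_top_iff.2 fun g _ => ?_⟩
  have hmono : closure (↑S ∪ (N : Set G)) ≤ closure (↑(R ∪ S) ∪ (N : Set G)) :=
    closure_mono (by push_cast; exact Set.union_subset_union_left _ Set.subset_union_right)
  set t : G := (g : G ⧸ H).out
  have ht : t ∈ closure (↑(R ∪ S) ∪ (N : Set G)) :=
    subset_closure <| Or.inl <|
      Finset.mem_union_left _ (Finset.mem_image_of_mem _ (Finset.mem_univ _))
  have htg : t⁻¹ * g ∈ H := QuotientGroup.eq.1 (Quotient.out_eq _)
  simpa using mul_mem ht (hmono (hS _ htg))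

/-- Let `G` be an infinite group with a chain of normal subgroups
`1 = Gₙ ≤ Gₙ₋₁ ≤ ⋯ ≤ G₁ ≤ G₀ ≤ G` such that `G/G₀` is finite and each quotient
`Gᵢ₋₁/Gᵢ` is finitely generated abelian. Then `G` has a normal subgroup `N`
whose quotient `G/N` is infinite, finitely generated, and virtually abelian. -/
theorem exists_infinite_fg_virtually_abelian_quotient
    (G : Type*) [Group G] [Infinite G] (n : ℕ)
    (Gc : Fin (n + 1) → Subgroup G)
    (hnormal : ∀ i, (Gc i).Normal)
    (hchain : ∀ i : Fin n, Gc i.succ ≤ Gc i.castSucc)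
    (hlast : Gc (Fin.last n) = ⊥)
    (hfin : Finite (G ⧸ Gc 0))
    (hab : ∀ i : Fin n, ∀ a ∈ Gc i.castSucc, ∀ b ∈ Gc i.castSucc,
      a * b * a⁻¹ * b⁻¹ ∈ Gc i.succ)
    (hfg : ∀ i : Fin n, ∃ S : Finset G, ↑S ⊆ (Gc i.castSucc : Set G) ∧
      ∀ g ∈ Gc i.castSucc, g ∈ Subgroup.closure (↑S ∪ (Gc i.succ : Set G))) :
    ∃ N : Subgroup G, N.Normal ∧
      Infinite (G ⧸ N) ∧
      (∃ S : Finset G, Subgroup.closure (↑S ∪ (N : Set G)) = ⊤) ∧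
      (∃ A : Subgroup G, N ≤ A ∧ A.FiniteIndex ∧
        ∀ a ∈ A, ∀ b ∈ A, a * b * a⁻¹ * b⁻¹ ∈ N) := by
  have hlast_inf : ¬ Finite (G ⧸ Gc (Fin.last n)) := by
    rw [hlast, not_finite_iff_infinite]
    exact QuotientGroup.quotientBot.toEquiv.infinite_iff.2 ‹_›
  obtain ⟨i, hAfin, hNinf⟩ :=
    Fin.exists_castSucc_and_not_succ (fun j => Finite (G ⧸ Gc j)) hfin hlast_inf
  have hA : (Gc i.castSucc).FiniteIndex := Subgroup.finiteIndex_of_finite_quotient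
  obtain ⟨S, -, hS⟩ := hfg i
  exact ⟨Gc i.succ, hnormal _, not_finite_iff_infinite.1 hNinf,
    Subgroup.exists_finset_closure_union_eq_top hS, Gc i.castSucc, hchain i, hA, hab i⟩
end
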